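/- Let n = 2 and let 1 ≤ i < j ≤ m−2. Then β_j >_PS β_i; that is, every profile of 2 preferences over m candidates at which β_i is manipulable is also a profile at which β_j is manipulable, and there exists a profile at which β_j is manipulable but β_i is not. -/

import Mathlib

/-!
With two voters and `1 ≤ j ≤ m - 2`, a voter who prefers some `c` to the `β_j` winner can make
`c` win by ranking `c` first and the remaining candidates in the reverse of the other voter's
order; this fails only if the other voter ranks `c` at position `≥ j` and `c` loses the tie-break
against the other voter's favourite. So if `β_j` is not manipulable, its winner `w` is the
favourite of one voter `u`, and every candidate the other voter prefers to `w` is ranked `≥ j`-th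
by `u` and loses the tie-break against `w` (`Entrenched`). This condition passes to every
`1 ≤ i ≤ j`, and it makes `w` the `β_i` winner and leaves no voter a profitable deviation.
For strictness, let voter 0 rank `0 ≻ 1 ≻ ⋯` and voter 1 the same order with `i` moved to the
top: candidate `0` is then entrenched for `β_i`, while under `β_j` voter 1 can make `i` win.
-/

/-- A preference order on `m` candidates: `σ c` is the position of candidate `c`
(position `0` is the most preferred). `σ c < σ d` means `c` is strictly preferred to `d`. -/
abbrev Pref (m : ℕ) := Fin m ≃ Fin m

/-- A voting rule for `n` voters and `m` candidates. -/
abbrev Rule (m n : ℕ) := (Fin n → Pref m) → Fin m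

/-- Total score of candidate `c` under score vector `s` (indexed by position) at profile `P`. -/
def score {m n : ℕ} (s : Fin m → ℕ) (P : Fin n → Pref m) (c : Fin m) : ℕ :=
  ∑ v, s (P v c)

/-- The scoring rule with score vector `s`: the winner is the candidate that is first in the
lexicographic tie-breaking order (i.e. has the least index) among those of maximal score. -/
def winner {m n : ℕ} [NeZero m] (s : Fin m → ℕ) (P : Fin n → Pref m) : Fin m :=
  (Finset.univ.filter fun c => ∀ d, score s P d ≤ score s P c).min' (by
    obtain ⟨c, -, hc⟩ := Finset.exists_max_image Finset.univ (score s P) Finset.univ_nonempty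
    exact ⟨c, Finset.mem_filter.mpr ⟨Finset.mem_univ c, fun d => hc d (Finset.mem_univ d)⟩⟩)

/-- `k`-approval, `α_k`: one point for each of the top `k` positions. -/
def approval (m n k : ℕ) [NeZero m] : Rule m n :=
  winner (fun r => if (r : ℕ) < k then 1 else 0)

/-- `k`-Borda, `β_k`: `max (0, k - r + 1)` points for (`1`-indexed) position `r`, i.e. `k - r`
(truncated subtraction) points for `0`-indexed position `r`. -/
def kBorda (m n k : ℕ) [NeZero m] : Rule m n :=
  winner (fun r => k - (r : ℕ))

/-- `f` is manipulable at profile `P`: some voter `v` can misreport some preference `Q` and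
obtain an outcome strictly preferred (by `v`'s true preferences) to the sincere outcome. -/
def Manipulable {m n : ℕ} (f : Rule m n) (P : Fin n → Pref m) : Prop :=
  ∃ (v : Fin n) (Q : Pref m), P v (f (Function.update P v Q)) < P v (f P)

/-- `f ≥_PS g` : every profile at which `g` is manipulable is one at which `f` is manipulable. -/
def MoreManip {m n : ℕ} (f g : Rule m n) : Prop :=
  ∀ P : Fin n → Pref m, Manipulable g P → Manipulable f P

section Winner

variable {m n : ℕ} [NeZero m] {s : Fin m → ℕ} {P : Fin n → Pref m}

lemma score_le_score_winner (d : Fin m) : score s P d ≤ score s P (winner s P) := by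
  have h : winner s P ∈ Finset.univ.filter fun c => ∀ d, score s P d ≤ score s P c :=
    Finset.min'_mem _ _
  exact (Finset.mem_filter.mp h).2 d

lemma winner_le_of_forall_score_le {c : Fin m} (hc : ∀ d, score s P d ≤ score s P c) :
    winner s P ≤ c :=
  Finset.min'_le _ _ (Finset.mem_filter.mpr ⟨Finset.mem_univ c, hc⟩)

lemma winner_eq_of_forall_ne {b : Fin m}
    (hb : ∀ d ≠ b, score s P d < score s P b ∨ score s P d ≤ score s P b ∧ b < d) :
    winner s P = b := by
  have hmax : ∀ d, score s P d ≤ score s P b := fun d => by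
    rcases eq_or_ne d b with rfl | hd
    · exact le_rfl
    · rcases hb d hd with h | h
      exacts [h.le, h.1]
  refine le_antisymm (winner_le_of_forall_score_le hmax) (not_lt.mp fun hlt => ?_)
  rcases hb _ hlt.ne with h | h
  · exact (h.trans_le (score_le_score_winner b)).false
  · exact lt_asymm hlt h.2

lemma winner_ne_of_lt {b c : Fin m} (hbc : b < c) (hs : score s P c ≤ score s P b) :
    winner s P ≠ c := by
  rintro rfl
  exact not_le.mpr hbc (winner_le_of_forall_score_le fun d => (score_le_score_winner d).trans hs)

end Winner

lemma Fin.two_eq_or_eq {v u : Fin 2} (hvu : v ≠ u) (x : Fin 2) : x = v ∨ x = u := by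
  omega

lemma score_two {m : ℕ} (s : Fin m → ℕ) (P : Fin 2 → Pref m) {v u : Fin 2} (hvu : v ≠ u)
    (d : Fin m) : score s P d = s (P v d) + s (P u d) := by
  rw [score, Fin.sum_univ_two]
  rcases Fin.two_eq_or_eq hvu 0 with rfl | rfl <;> rcases Fin.two_eq_or_eq hvu 1 with h | h <;>
    simp_all [add_comm]

lemma Pref.exists_top_bury {m : ℕ} [NeZero m] (ρ : Pref m) (c : Fin m) :
    ∃ Q : Pref m, Q c = 0 ∧ ∀ d ≠ c, 1 ≤ (Q d : ℕ) ∧ m ≤ Q d + ρ d + 1 := by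
  refine ⟨ρ.trans (Fin.revPerm.trans (Fin.cycleRange (Fin.rev (ρ c)))), ?_, fun d hd => ?_⟩
  · simp
  have hrev : (Fin.rev (ρ d) : ℕ) + ρ d + 1 = m := by rw [Fin.val_rev]; omega
  have hne : Fin.rev (ρ d) ≠ Fin.rev (ρ c) := fun h => hd (ρ.injective (Fin.rev_injective h))
  simp only [Equiv.trans_apply, Fin.revPerm_apply]
  rcases hne.lt_or_gt with h | h
  · rw [Fin.coe_cycleRange_of_lt h]; omega
  · rw [Fin.cycleRange_of_gt h]; have : (Fin.rev (ρ c) : ℕ) < Fin.rev (ρ d) := h; omega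

def Entrenched {m n : ℕ} [NeZero m] (k : ℕ) (P : Fin n → Pref m) (u v : Fin n) (w : Fin m) :
    Prop :=
  P u w = 0 ∧ ∀ c, P v c < P v w → k ≤ (P u c : ℕ) ∧ w < c

lemma Entrenched.mono {m n : ℕ} [NeZero m] {k l : ℕ} {P : Fin n → Pref m} {u v : Fin n}
    {w : Fin m} (h : Entrenched k P u v w) (hlk : l ≤ k) : Entrenched l P u v w :=
  ⟨h.1, fun c hc => (h.2 c hc).imp_left hlk.trans⟩

section TwoVoters

variable {m : ℕ} [NeZero m] {P : Fin 2 → Pref m} {v u : Fin 2}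

lemma kBorda_two_update_eq {j : ℕ} (hj : 1 ≤ j) (hjm : j + 2 ≤ m) (hvu : v ≠ u)
    {Q : Pref m} {c : Fin m} (hQc : Q c = 0) (hQ : ∀ d ≠ c, 1 ≤ (Q d : ℕ) ∧ m ≤ Q d + P u d + 1)
    (hc : (P u c : ℕ) < j ∨ c < (P u).symm 0) :
    kBorda m 2 j (Function.update P v Q) = c := by
  refine winner_eq_of_forall_ne fun d hd => ?_
  simp only [score_two _ _ hvu, Function.update_self, Function.update_of_ne hvu.symm, hQc,
    Fin.val_zero]
  obtain ⟨hQd, hsum⟩ := hQ d hd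
  by_cases htop : P u d = 0
  · have hd_top : (P u).symm 0 = d := by rw [← htop, Equiv.symm_apply_apply]
    rw [htop, Fin.val_zero] at hsum ⊢
    rcases hc with hc | hc
    · left; omega
    · right; exact ⟨by omega, hd_top ▸ hc⟩
  · have : (P u d : ℕ) ≠ 0 := fun h => htop (Fin.ext h)
    left; omega

lemma manipulable_kBorda_two {j : ℕ} (hj : 1 ≤ j) (hjm : j + 2 ≤ m) (hvu : v ≠ u) {c : Fin m}
    (hpref : P v c < P v (kBorda m 2 j P)) (hc : (P u c : ℕ) < j ∨ c < (P u).symm 0) :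
    Manipulable (kBorda m 2 j) P := by
  obtain ⟨Q, hQc, hQ⟩ := (P u).exists_top_bury c
  exact ⟨v, Q, by rwa [kBorda_two_update_eq hj hjm hvu hQc hQ hc]⟩

lemma le_and_symm_zero_le_of_not_manipulable {j : ℕ} (hj : 1 ≤ j) (hjm : j + 2 ≤ m)
    (hM : ¬ Manipulable (kBorda m 2 j) P) (hvu : v ≠ u) {c : Fin m}
    (hc : P v c < P v (kBorda m 2 j P)) : j ≤ (P u c : ℕ) ∧ (P u).symm 0 ≤ c := by
  by_contra hcon
  rw [not_and_or, not_le, not_le] at hcon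
  exact hM (manipulable_kBorda_two hj hjm hvu hc hcon)

lemma exists_top_eq_kBorda_of_not_manipulable {j : ℕ} (hj : 1 ≤ j) (hjm : j + 2 ≤ m)
    (hM : ¬ Manipulable (kBorda m 2 j) P) : ∃ u, P u (kBorda m 2 j P) = 0 := by
  by_contra! hw
  -- otherwise each voter prefers her favourite to the winner, and these two favourites would
  -- have to beat each other in the tie-break
  have hfav (v : Fin 2) : P v ((P v).symm 0) < P v (kBorda m 2 j P) := by
    rw [Equiv.apply_symm_apply]; exact Fin.pos_iff_ne_zero.mpr (hw v)
  obtain ⟨hj0, h10⟩ :=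
    le_and_symm_zero_le_of_not_manipulable (u := 1) hj hjm hM (by decide) (hfav 0)
  obtain ⟨-, h01⟩ :=
    le_and_symm_zero_le_of_not_manipulable (u := 0) hj hjm hM (by decide) (hfav 1)
  rw [le_antisymm h01 h10, Equiv.apply_symm_apply, Fin.val_zero] at hj0
  omega

lemma entrenched_of_not_manipulable {j : ℕ} (hj : 1 ≤ j) (hjm : j + 2 ≤ m)
    (hM : ¬ Manipulable (kBorda m 2 j) P) (hvu : v ≠ u) (htop : P u (kBorda m 2 j P) = 0) :
    Entrenched j P u v (kBorda m 2 j P) := by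
  refine ⟨htop, fun c hc => ?_⟩
  obtain ⟨hjc, hc_le⟩ := le_and_symm_zero_le_of_not_manipulable hj hjm hM hvu hc
  rw [← htop, Equiv.symm_apply_apply] at hc_le
  exact ⟨hjc, hc_le.lt_of_ne fun h => hc.ne (h ▸ rfl)⟩

lemma exists_entrenched_of_not_manipulable {j : ℕ} (hj : 1 ≤ j) (hjm : j + 2 ≤ m)
    (hM : ¬ Manipulable (kBorda m 2 j) P) :
    ∃ u v, v ≠ u ∧ Entrenched j P u v (kBorda m 2 j P) := by
  obtain ⟨u, htop⟩ := exists_top_eq_kBorda_of_not_manipulable hj hjm hM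
  obtain ⟨v, hvu⟩ := exists_ne u
  exact ⟨u, v, hvu, entrenched_of_not_manipulable hj hjm hM hvu htop⟩

lemma kBorda_two_eq_of_entrenched {k : ℕ} (hk : 1 ≤ k) (hvu : v ≠ u) {w : Fin m}
    (h : Entrenched k P u v w) : kBorda m 2 k P = w := by
  refine winner_eq_of_forall_ne fun d hd => ?_
  simp only [score_two _ _ hvu, h.1, Fin.val_zero]
  rcases lt_trichotomy (P v d) (P v w) with hlt | heq | hgt
  · obtain ⟨hkd, hwd⟩ := h.2 d hlt
    exact Or.inr ⟨by omega, hwd⟩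
  · exact absurd ((P v).injective heq) hd
  · have hud : (P u d : ℕ) ≠ 0 := fun h0 => hd ((P u).injective (Fin.ext (by rw [h0, h.1]; rfl)))
    have : (P v w : ℕ) < P v d := hgt
    left; omega

lemma not_manipulable_of_entrenched {k : ℕ} (hk : 1 ≤ k) (hvu : v ≠ u) {w : Fin m}
    (h : Entrenched k P u v w) : ¬ Manipulable (kBorda m 2 k) P := by
  rintro ⟨v', Q, hlt⟩
  rw [kBorda_two_eq_of_entrenched hk hvu h] at hlt
  rcases Fin.two_eq_or_eq hvu v' with rfl | rfl
  · obtain ⟨hkw', hww'⟩ := h.2 _ hlt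
    refine winner_ne_of_lt hww' ?_ rfl
    simp only [score_two _ _ hvu, Function.update_self, Function.update_of_ne hvu.symm, h.1,
      Fin.val_zero]
    omega
  · rw [h.1] at hlt
    exact Fin.not_lt_zero _ hlt

end TwoVoters

lemma moreManip_kBorda_two {m i j : ℕ} [NeZero m] (hi : 1 ≤ i) (hij : i ≤ j) (hjm : j + 2 ≤ m) :
    MoreManip (kBorda m 2 j) (kBorda m 2 i) := by
  intro P hMi
  by_contra hMj
  obtain ⟨u, v, hvu, h⟩ := exists_entrenched_of_not_manipulable (by omega) hjm hMj
  exact not_manipulable_of_entrenched hi hvu (h.mono hij) hMi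

lemma exists_manipulable_kBorda_two_not_manipulable {m i j : ℕ} [NeZero m] (hi : 1 ≤ i)
    (hij : i < j) (hjm : j + 2 ≤ m) :
    ∃ P : Fin 2 → Pref m, Manipulable (kBorda m 2 j) P ∧ ¬ Manipulable (kBorda m 2 i) P := by
  set c : Fin m := ⟨i, by omega⟩
  set P : Fin 2 → Pref m := ![Equiv.refl _, Fin.cycleRange c]
  have hc : 0 < c := by rw [Fin.lt_def, Fin.val_zero]; exact hi
  have hP1c : P 1 c = 0 := Fin.cycleRange_self c
  have hP10 : (P 1 0 : ℕ) = 1 := Fin.coe_cycleRange_of_lt hc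
  have hent : Entrenched i P 0 1 0 := by
    refine ⟨rfl, fun d hd => ?_⟩
    have hd0 : (P 1 d : ℕ) = 0 := by rw [Fin.lt_def, hP10] at hd; omega
    obtain rfl : d = c := (P 1).injective (by rw [hP1c]; exact Fin.ext hd0)
    exact ⟨le_rfl, hc⟩
  refine ⟨P, ?_, not_manipulable_of_entrenched hi (by decide) hent⟩
  by_contra hMj
  obtain ⟨u, v, hvu, htop, hsafe⟩ := exists_entrenched_of_not_manipulable (by omega) hjm hMj
  generalize kBorda m 2 j P = w at htop hsafe
  rcases Fin.two_eq_or_eq (show (0 : Fin 2) ≠ 1 by decide) u with rfl | rfl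
  · obtain rfl : v = 1 := by omega
    obtain rfl : w = 0 := htop
    have hji : j ≤ i := (hsafe c (by rw [Fin.lt_def, hP1c, hP10, Fin.val_zero]; omega)).1
    omega
  · obtain rfl : v = 0 := by omega
    obtain rfl : w = c := (P 1).injective (htop.trans hP1c.symm)
    exact absurd (hsafe 0 hc).2 (Fin.not_lt_zero c)

/-- For `n = 2` and `1 ≤ i < j ≤ m-2`: `β_j >_PS β_i`, i.e. every profile at which `β_i`
is manipulable is one at which `β_j` is manipulable, and there is a profile at which `β_j`
is manipulable but `β_i` is not. -/
theorem stmt_18 (m i j : ℕ) [NeZero m] (hi : 1 ≤ i) (hij : i < j) (hj : j ≤ m - 2) :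
    MoreManip (kBorda m 2 j) (kBorda m 2 i) ∧
    ∃ P : Fin 2 → Pref m,
      Manipulable (kBorda m 2 j) P ∧ ¬ Manipulable (kBorda m 2 i) P :=
  ⟨moreManip_kBorda_two hi hij.le (by omega),
    exists_manipulable_kBorda_two_not_manipulable hi hij (by omega)⟩
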